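/- arXiv:2604.01451 — 5 statements merged into one kernel-verified Lean document; each statement's English description precedes it below -/
import Mathlib

section
/- Let a, b be positive integers with a prime and a > b, and let V ∈ ℤ^{(a-1)×b} be the reduced Vandermonde matrix V_{i,j} = i^{j-1} mod a. Then for every nonzero integer vector x ∈ ℤ^{a-1} with fewer than b nonzero entries, the vector x·V is nonzero. -/
/-!
Let `k < b` be the number of nonzero entries of `x`. The square submatrix of `V` on these `k` rows
and the first `k` columns is, modulo `a`, the Vandermonde matrix of the distinct nodes `i + 1` in
the field `ZMod a`; so its determinant is nonzero mod `a`, hence nonzero in `ℤ`. The restriction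
of `x` to its support is then a nonzero vector killed by a square matrix of nonzero determinant
over the domain `ℤ`, which is impossible. (Reducing `x` itself mod `a` would not work: all its
entries may be divisible by `a`.)
-/

open Matrix

theorem Matrix.eq_zero_of_vecMul_eq_zero_of_det_submatrix_ne_zero {m n ι R : Type*}
    [Fintype m] [Fintype ι] [DecidableEq ι] [CommRing R] [IsDomain R]
    {V : Matrix m n R} {x : m → R} {e : ι → m} (he : Function.Injective e)
    (hsupp : ∀ i, x i ≠ 0 → i ∈ Set.range e) (f : ι → n)
    (hdet : (V.submatrix e f).det ≠ 0) (h : x ᵥ* V = 0) : x = 0 := by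
  have hsub : (x ∘ e) ᵥ* V.submatrix e f = 0 := by
    funext j
    have hj : ∑ i, x i * V i (f j) = 0 := congrFun h (f j)
    rw [Pi.zero_apply, ← hj]
    refine Fintype.sum_of_injective e he _ _ (fun i hi => ?_) (fun _ => rfl)
    rw [not_imp_comm.mp (hsupp i) hi, zero_mul]
  have hxe : x ∘ e = 0 := by
    by_contra hne
    exact hdet (exists_vecMul_eq_zero_iff.mp ⟨_, hne, hsub⟩)
  funext i
  by_contra hi
  obtain ⟨j, rfl⟩ := hsupp i hi
  exact hi (congrFun hxe j)

theorem ZMod.injective_natCast_fin_pred_add_one (n : ℕ) :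
    Function.Injective (fun i : Fin (n - 1) => ((i : ℕ) : ZMod n) + 1) := by
  intro i j hij
  have hval := congrArg ZMod.val (add_right_cancel hij)
  rwa [ZMod.val_natCast_of_lt (by omega), ZMod.val_natCast_of_lt (by omega), Fin.val_inj] at hval

theorem det_submatrix_reducedVandermonde_ne_zero {p b k : ℕ} [Fact p.Prime]
    {V : Matrix (Fin (p - 1)) (Fin b) ℤ} (hV : ∀ i j, V i j = ((i : ℤ) + 1) ^ (j : ℕ) % (p : ℤ))
    {e : Fin k → Fin (p - 1)} (he : Function.Injective e) (hk : k ≤ b) :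
    (V.submatrix e (Fin.castLE hk)).det ≠ 0 := by
  set v : Fin k → ZMod p := fun q => ((e q : ℕ) : ZMod p) + 1
  have hmap : (Int.castRingHom (ZMod p)).mapMatrix (V.submatrix e (Fin.castLE hk)) =
      vandermonde v := by
    ext q r
    simp [v, hV, ZMod.intCast_mod]
  have hv : Function.Injective v := (ZMod.injective_natCast_fin_pred_add_one p).comp he
  intro hdet
  apply det_vandermonde_ne_zero_iff.mpr hv
  rw [← hmap, ← RingHom.map_det, hdet, map_zero]

theorem stmt1_general (a b : ℕ) (hprime : Nat.Prime a)
    (V : Matrix (Fin (a - 1)) (Fin b) ℤ)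
    (hV : ∀ i j, V i j = ((i : ℤ) + 1) ^ (j : ℕ) % (a : ℤ))
    (x : Fin (a - 1) → ℤ) (hx : x ≠ 0)
    (hsupp : (Finset.univ.filter (fun i => x i ≠ 0)).card < b) :
    x ᵥ* V ≠ 0 := by
  have : Fact a.Prime := ⟨hprime⟩
  set s := Finset.univ.filter (fun i => x i ≠ 0)
  set e := s.orderEmbOfFin rfl
  have hrange : ∀ i, x i ≠ 0 → i ∈ Set.range e := fun i hi => by
    rw [Finset.range_orderEmbOfFin]
    exact Finset.mem_filter.mpr ⟨Finset.mem_univ i, hi⟩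
  exact fun h => hx (eq_zero_of_vecMul_eq_zero_of_det_submatrix_ne_zero e.injective hrange _
    (det_submatrix_reducedVandermonde_ne_zero hV e.injective hsupp.le) h)

/-- For the reduced Vandermonde matrix `V i j = (i+1)^j mod a` with `a` prime,
`a > b`, every nonzero integer vector `x` with fewer than `b` nonzero entries
satisfies `x ᵥ* V ≠ 0`. -/
theorem stmt1 (a b : ℕ) (ha : 0 < a) (hb : 0 < b) (hprime : Nat.Prime a) (hab : b < a)
    (V : Matrix (Fin (a - 1)) (Fin b) ℤ)
    (hV : ∀ i j, V i j = ((i : ℤ) + 1) ^ (j : ℕ) % (a : ℤ))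
    (x : Fin (a - 1) → ℤ) (hx : x ≠ 0)
    (hsupp : (Finset.univ.filter (fun i => x i ≠ 0)).card < b) :
    x ᵥ* V ≠ 0 :=
  stmt1_general a b hprime V hV x hx hsupp
end

section
/- Let G = (V, E) be a d-regular undirected multigraph on n vertices whose adjacency matrix has second largest eigenvalue magnitude at most ρ. Then for every positive integer r and every subset S ⊆ V, the probability that a uniformly random walk of length r (a uniform starting vertex followed by r−1 uniform random steps) has all r visited vertices contained in S is at most (|S|/n + ρ/d)^r. -/
/-!
Let `w₀ = 1_S` and `wₖ₊₁ = 1_S · A wₖ`, so that the total weight of the walks staying in `S` is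
`∑ wₘ`. Split a vector `x` supported on `S` into its mean `c` and a part `y` orthogonal to the
all-ones vector: `A x = d c 𝟙 + A y`. Cauchy–Schwarz gives `|c| n ≤ √|S| ‖x‖` and the spectral
hypothesis gives `‖A y‖ ≤ ρ ‖y‖ ≤ ρ ‖x‖`, so `x ↦ 1_S · A x` multiplies norms by at most
`d |S| / n + ρ`. Iterating, and applying Cauchy–Schwarz once more to `∑ wₘ = ⟪1_S, wₘ⟫`, bounds
the walk weight by `|S| (d |S| / n + ρ)ᵐ`.
-/

open Matrix Finset
open WithLp (toLp)

variable {ι : Type*}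

section Euclidean

variable [Fintype ι]

theorem norm_toLp_sq (x : ι → ℝ) : ‖toLp 2 x‖ ^ 2 = ∑ i, x i ^ 2 :=
  EuclideanSpace.real_norm_sq_eq _

theorem norm_toLp_le_mul_of_sum_sq_le {x y : ι → ℝ} {c : ℝ} (hc : 0 ≤ c)
    (h : ∑ i, x i ^ 2 ≤ c ^ 2 * ∑ i, y i ^ 2) : ‖toLp 2 x‖ ≤ c * ‖toLp 2 y‖ := by
  rw [← norm_toLp_sq, ← norm_toLp_sq, ← mul_pow] at h
  exact pow_le_pow_iff_left₀ (norm_nonneg _) (by positivity) two_ne_zero |>.mp h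

theorem norm_toLp_indicator_le (S : Set ι) (x : ι → ℝ) :
    ‖toLp 2 (S.indicator x)‖ ≤ ‖toLp 2 x‖ := by
  classical
  refine (norm_toLp_le_mul_of_sum_sq_le zero_le_one ?_).trans_eq (one_mul _)
  rw [one_pow, one_mul]
  refine sum_le_sum fun i _ => ?_
  by_cases hi : i ∈ S <;> simp [hi, sq_nonneg]

theorem norm_toLp_indicator_one (S : Finset ι) :
    ‖toLp 2 ((S : Set ι).indicator (1 : ι → ℝ))‖ = √(#S) := by
  classical
  rw [← Real.sqrt_sq (norm_nonneg _), norm_toLp_sq]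
  simp [Set.indicator_apply, apply_ite (· ^ 2)]

theorem abs_sum_le_sqrt_card_mul_norm {S : Finset ι} {x : ι → ℝ}
    (hx : Function.support x ⊆ S) : |∑ i, x i| ≤ √(#S) * ‖toLp 2 x‖ := by
  have hsum : ∑ i, x i = (S : Set ι).indicator 1 ⬝ᵥ x := by
    refine sum_congr rfl fun i _ => ?_
    by_cases hi : i ∈ S
    · simp [hi]
    · simp [hi, Function.notMem_support.mp fun h => hi (hx h)]
  rw [hsum, ← norm_toLp_indicator_one]
  simpa [EuclideanSpace.inner_toLp_toLp, dotProduct_comm] using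
    abs_real_inner_le_norm (toLp 2 ((S : Set ι).indicator 1)) (toLp 2 x)

theorem sum_sq_sub_mean_le [Nonempty ι] (x : ι → ℝ) :
    ∑ i, (x i - (∑ j, x j) / Fintype.card ι) ^ 2 ≤ ∑ i, x i ^ 2 := by
  set c := (∑ j, x j) / Fintype.card ι
  have hn : (0 : ℝ) < Fintype.card ι := Nat.cast_pos.mpr Fintype.card_pos
  have hsum : ∑ j, x j = Fintype.card ι * c := by simp only [c]; field_simp
  have : ∑ i, (x i - c) ^ 2 = ∑ i, x i ^ 2 - Fintype.card ι * c ^ 2 := by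
    simp only [sub_sq, sum_add_distrib, sum_sub_distrib, ← sum_mul, ← mul_sum, hsum, sum_const,
      card_univ, nsmul_eq_mul]
    ring
  rw [this]
  nlinarith [sq_nonneg c]

theorem norm_indicator_mulVec_le [Nonempty ι] {A : Matrix ι ι ℝ} {d ρ : ℝ} (hd : 0 ≤ d)
    (hρ : 0 ≤ ρ) (hreg : ∀ i, ∑ j, A i j = d)
    (hspec : ∀ v : ι → ℝ, ∑ i, v i = 0 → ‖toLp 2 (A *ᵥ v)‖ ≤ ρ * ‖toLp 2 v‖)
    {S : Finset ι} {x : ι → ℝ} (hx : Function.support x ⊆ S) :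
    ‖toLp 2 ((S : Set ι).indicator (A *ᵥ x))‖ ≤ (d * #S / Fintype.card ι + ρ) * ‖toLp 2 x‖ := by
  set n : ℝ := (Fintype.card ι : ℝ)
  have hn : 0 < n := Nat.cast_pos.mpr Fintype.card_pos
  set c := (∑ i, x i) / n
  set y : ι → ℝ := fun i => x i - c
  have hy : ∑ i, y i = 0 := by
    simp only [y, sum_sub_distrib, sum_const, card_univ, nsmul_eq_mul, c]
    field_simp
    ring
  have hAx : A *ᵥ x = (d * c) • 1 + A *ᵥ y := by
    ext i
    simp [y, mulVec, dotProduct, mul_sub, sum_sub_distrib, ← sum_mul, hreg]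
  have hmean : |c| * n ≤ √(#S) * ‖toLp 2 x‖ := by
    rw [← abs_of_pos hn, ← abs_mul, div_mul_cancel₀ _ hn.ne']
    exact abs_sum_le_sqrt_card_mul_norm hx
  have hy_le : ‖toLp 2 y‖ ≤ ‖toLp 2 x‖ := by
    simpa using norm_toLp_le_mul_of_sum_sq_le zero_le_one (by simpa using sum_sq_sub_mean_le x)
  calc ‖toLp 2 ((S : Set ι).indicator (A *ᵥ x))‖
      = ‖(d * c) • toLp 2 ((S : Set ι).indicator 1) +
          toLp 2 ((S : Set ι).indicator (A *ᵥ y))‖ := by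
        rw [hAx, Set.indicator_add', ← WithLp.toLp_smul, ← WithLp.toLp_add]
        congr 3
        ext i
        by_cases hi : i ∈ S <;> simp [hi]
    _ ≤ d * |c| * √(#S) + ρ * ‖toLp 2 x‖ := by
        grw [norm_add_le, norm_smul, norm_toLp_indicator_one, norm_toLp_indicator_le,
          hspec y hy, hy_le]
        rw [Real.norm_eq_abs, abs_mul, abs_of_nonneg hd]
    _ = d * √(#S) * (|c| * n) / n + ρ * ‖toLp 2 x‖ := by field_simp
    _ ≤ d * √(#S) * (√(#S) * ‖toLp 2 x‖) / n + ρ * ‖toLp 2 x‖ := by gcongr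
    _ = (d * #S / n + ρ) * ‖toLp 2 x‖ := by
        rw [← mul_assoc, mul_assoc d, Real.mul_self_sqrt (Nat.cast_nonneg _)]
        ring

end Euclidean

section WalkVec

variable [Fintype ι]

noncomputable def walkVec (A : Matrix ι ι ℝ) (S : Finset ι) : ℕ → ι → ℝ
  | 0 => (S : Set ι).indicator 1
  | k + 1 => (S : Set ι).indicator (A *ᵥ walkVec A S k)

theorem support_walkVec_subset (A : Matrix ι ι ℝ) (S : Finset ι) (m : ℕ) :
    Function.support (walkVec A S m) ⊆ S := by
  cases m <;> exact Set.support_indicator_subset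

variable [Nonempty ι] {A : Matrix ι ι ℝ} {d ρ : ℝ} (hd : 0 ≤ d) (hρ : 0 ≤ ρ)
  (hreg : ∀ i, ∑ j, A i j = d)
  (hspec : ∀ v : ι → ℝ, ∑ i, v i = 0 → ‖toLp 2 (A *ᵥ v)‖ ≤ ρ * ‖toLp 2 v‖) (S : Finset ι)
include hd hρ hreg hspec

theorem norm_walkVec_le (m : ℕ) :
    ‖toLp 2 (walkVec A S m)‖ ≤ (d * #S / Fintype.card ι + ρ) ^ m * √(#S) := by
  induction m with
  | zero => simp [walkVec, norm_toLp_indicator_one]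
  | succ k ih =>
    calc ‖toLp 2 (walkVec A S (k + 1))‖
        ≤ (d * #S / Fintype.card ι + ρ) * ‖toLp 2 (walkVec A S k)‖ :=
          norm_indicator_mulVec_le hd hρ hreg hspec (support_walkVec_subset A S k)
      _ ≤ (d * #S / Fintype.card ι + ρ) * ((d * #S / Fintype.card ι + ρ) ^ k * √(#S)) := by
          gcongr
      _ = (d * #S / Fintype.card ι + ρ) ^ (k + 1) * √(#S) := by ring

theorem sum_walkVec_le (m : ℕ) :
    ∑ j, walkVec A S m j ≤ #S * (d * #S / Fintype.card ι + ρ) ^ m :=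
  calc ∑ j, walkVec A S m j
      ≤ √(#S) * ‖toLp 2 (walkVec A S m)‖ :=
        (le_abs_self _).trans (abs_sum_le_sqrt_card_mul_norm (support_walkVec_subset A S m))
    _ ≤ √(#S) * ((d * #S / Fintype.card ι + ρ) ^ m * √(#S)) := by
        gcongr
        exact norm_walkVec_le hd hρ hreg hspec S m
    _ = #S * (d * #S / Fintype.card ι + ρ) ^ m := by
        rw [mul_left_comm, Real.mul_self_sqrt (Nat.cast_nonneg _), mul_comm]

end WalkVec

section Walks

variable [DecidableEq ι] {A : Matrix ι ι ℝ} {S : Finset ι}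

-- `n dᵐ` times the probability that the random walk is `v`, if `v` stays in `S`; else `0`.
def walkWeight (A : Matrix ι ι ℝ) (S : Finset ι) {m : ℕ} (v : Fin (m + 1) → ι) : ℝ :=
  if ∀ i, v i ∈ S then ∏ i : Fin m, A (v i.castSucc) (v i.succ) else 0

theorem walkWeight_cons {m : ℕ} (j : ι) (v : Fin (m + 1) → ι) :
    walkWeight A S (Fin.cons j v : Fin (m + 2) → ι) =
      if j ∈ S then A j (v 0) * walkWeight A S v else 0 := by
  by_cases hj : j ∈ S
  · simp [walkWeight, Fin.forall_fin_succ, hj, Fin.prod_univ_succ]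
  · simp [walkWeight, Fin.forall_fin_succ, hj]

variable [Fintype ι]

theorem sum_walkWeight_cons (m : ℕ) (j : ι) :
    ∑ v : Fin m → ι, walkWeight A S (Fin.cons j v : Fin (m + 1) → ι) = walkVec A S m j := by
  induction m generalizing j with
  | zero => by_cases hj : j ∈ S <;> simp [walkWeight, walkVec, hj]
  | succ m ih =>
    simp_rw [walkWeight_cons]
    by_cases hj : j ∈ S
    · simp only [hj, if_true, walkVec, Set.indicator_of_mem (mem_coe.2 hj), mulVec,
        dotProduct, ← ih]
      rw [← (Fin.consEquiv fun _ => ι).sum_comp, Fintype.sum_prod_type]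
      simp only [mul_sum]
      rfl
    · simp [hj, walkVec]

theorem sum_walkWeight (m : ℕ) :
    ∑ v : Fin (m + 1) → ι, walkWeight A S v = ∑ j, walkVec A S m j := by
  rw [← (Fin.consEquiv fun _ => ι).sum_comp, Fintype.sum_prod_type]
  exact sum_congr rfl fun j _ => sum_walkWeight_cons m j

end Walks

theorem stmt4_general (n d : ℕ) (hn : 0 < n) (hd : 0 < d) (ρ : ℝ) (hρ : 0 ≤ ρ)
    (A : Matrix (Fin n) (Fin n) ℝ)
    (hreg : ∀ i, ∑ j, A i j = (d : ℝ))
    (hspec : ∀ v : Fin n → ℝ, (∑ i, v i) = 0 →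
      ∑ i, (A.mulVec v i) ^ 2 ≤ ρ ^ 2 * ∑ i, (v i) ^ 2)
    (m : ℕ) (S : Finset (Fin n)) :
    (∑ v : Fin (m + 1) → Fin n,
        if ∀ i, v i ∈ S then ∏ i : Fin m, A (v i.castSucc) (v i.succ) else 0)
      / ((n : ℝ) * (d : ℝ) ^ m)
    ≤ ((S.card : ℝ) / n + ρ / d) ^ (m + 1) := by
  have : Nonempty (Fin n) := Fin.pos_iff_nonempty.mp hn
  have hwalks := sum_walkVec_le d.cast_nonneg hρ hreg
    (fun v hv => norm_toLp_le_mul_of_sum_sq_le hρ (hspec v hv)) S m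
  rw [Fintype.card_fin] at hwalks
  change (∑ v, walkWeight A S v) / _ ≤ _
  rw [sum_walkWeight]
  calc (∑ j, walkVec A S m j) / (n * d ^ m)
      ≤ #S * (d * #S / n + ρ) ^ m / (n * d ^ m) := by gcongr
    _ = #S / n * (#S / n + ρ / d) ^ m := by
        rw [show d * #S / n + ρ = d * (#S / n + ρ / d) by field_simp, mul_pow]
        field_simp
    _ ≤ (#S / n + ρ / d) * (#S / n + ρ / d) ^ m := by
        gcongr
        exact le_add_of_nonneg_right (by positivity)
    _ = (#S / n + ρ / d) ^ (m + 1) := (pow_succ' _ _).symm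

/-- Expander-walk hitting bound. `A` is the adjacency matrix of a `d`-regular
undirected multigraph on `n` vertices (symmetric, natural-number entries, row
sums `d`) whose second largest eigenvalue has magnitude at most `ρ`
(expressed spectrally: `‖A v‖ ≤ ρ ‖v‖` for vectors `v` orthogonal to the
all-ones vector). A uniformly random walk visiting `r = m + 1` vertices
(uniform start, uniform random steps; such a walk `v` has probability
proportional to `∏ A (v i) (v (i+1))`) stays inside a set `S` with
probability at most `(|S|/n + ρ/d)^r`. -/
theorem stmt4 (n d : ℕ) (hn : 0 < n) (hd : 0 < d) (ρ : ℝ) (hρ : 0 ≤ ρ)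
    (A : Matrix (Fin n) (Fin n) ℝ)
    (hsym : A.IsSymm)
    (hnat : ∀ i j, ∃ k : ℕ, A i j = (k : ℝ))
    (hreg : ∀ i, ∑ j, A i j = (d : ℝ))
    (hspec : ∀ v : Fin n → ℝ, (∑ i, v i) = 0 →
      ∑ i, (A.mulVec v i) ^ 2 ≤ ρ ^ 2 * ∑ i, (v i) ^ 2)
    (m : ℕ) (S : Finset (Fin n)) :
    (∑ v : Fin (m + 1) → Fin n,
        if ∀ i, v i ∈ S then ∏ i : Fin m, A (v i.castSucc) (v i.succ) else 0)
      / ((n : ℝ) * (d : ℝ) ^ m)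
    ≤ ((S.card : ℝ) / n + ρ / d) ^ (m + 1) :=
  stmt4_general n d hn hd ρ hρ A hreg hspec m S
end

section
/- Let B ∈ ℤ^{M×N} and B' ∈ ℤ^{M'×N'} be integer matrices with linearly independent rows generating lattices L(B) and L(B'). Define λ_0(L) as the minimum of ‖v‖_0 (number of nonzero entries) over nonzero lattice vectors v. Then λ_0(L(B ⊗ B')) ≤ λ_0(L(B)) · λ_0(L(B')), where B ⊗ B' is the Kronecker (tensor) product. -/
/-! The product `x ⊗ x'` of coefficient vectors produces the lattice vector `(x B) ⊗ (x' B')`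
of `L(B ⊗ B')`, whose support is the product of the supports, so every product `a * b` of
`ℓ₀`-norms from `L(B)` and `L(B')` is an `ℓ₀`-norm from `L(B ⊗ B')`. If one of the lattices
has no nonzero vector, its basis is zero, hence so is `B ⊗ B'`, and both sides vanish. -/

open Matrix Finset

/-- The set of `ℓ₀`-norms (numbers of nonzero entries) of nonzero vectors of
the lattice generated by the rows of `B`. -/
def lamZeroSet {ι κ : Type*} [Fintype ι] [Fintype κ] [DecidableEq κ]
    (B : Matrix ι κ ℤ) : Set ℕ :=
  {k : ℕ | ∃ x : ι → ℤ, x ᵥ* B ≠ 0 ∧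
    k = (Finset.univ.filter (fun j => (x ᵥ* B) j ≠ 0)).card}

theorem Matrix.vecMul_kroneckerMap_mul {R ι κ ι' κ' : Type*} [CommSemiring R]
    [Fintype ι] [Fintype ι'] (B : Matrix ι κ R) (B' : Matrix ι' κ' R)
    (x : ι → R) (x' : ι' → R) :
    (fun p : ι × ι' => x p.1 * x' p.2) ᵥ* kroneckerMap (· * ·) B B'
      = fun q => (x ᵥ* B) q.1 * (x' ᵥ* B') q.2 := by
  ext ⟨j, j'⟩
  simp only [vecMul, dotProduct, kroneckerMap_apply, Fintype.sum_prod_type, sum_mul_sum]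
  exact sum_congr rfl fun i _ => sum_congr rfl fun i' _ => by ring

theorem Finset.filter_mul_ne_zero_prod {R κ κ' : Type*} [MulZeroClass R] [NoZeroDivisors R]
    [DecidableEq R] [Fintype κ] [Fintype κ'] (u : κ → R) (v : κ' → R) :
    univ.filter (fun q : κ × κ' => u q.1 * v q.2 ≠ 0)
      = univ.filter (fun j => u j ≠ 0) ×ˢ univ.filter (fun j' => v j' ≠ 0) := by
  ext ⟨j, j'⟩
  simp

theorem mul_mem_lamZeroSet_kroneckerMap {ι κ ι' κ' : Type*} [Fintype ι] [Fintype κ]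
    [Fintype ι'] [Fintype κ'] [DecidableEq κ] [DecidableEq κ']
    {B : Matrix ι κ ℤ} {B' : Matrix ι' κ' ℤ} {a b : ℕ}
    (ha : a ∈ lamZeroSet B) (hb : b ∈ lamZeroSet B') :
    a * b ∈ lamZeroSet (kroneckerMap (· * ·) B B') := by
  obtain ⟨x, hx, rfl⟩ := ha
  obtain ⟨x', hx', rfl⟩ := hb
  refine ⟨fun p => x p.1 * x' p.2, ?_, ?_⟩
  · obtain ⟨j, hj⟩ := Function.ne_iff.1 hx
    obtain ⟨j', hj'⟩ := Function.ne_iff.1 hx'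
    rw [vecMul_kroneckerMap_mul]
    exact Function.ne_iff.2 ⟨(j, j'), mul_ne_zero hj hj'⟩
  · rw [vecMul_kroneckerMap_mul, filter_mul_ne_zero_prod, card_product]

theorem lamZeroSet_eq_empty_iff {ι κ : Type*} [Fintype ι] [Fintype κ] [DecidableEq κ]
    [DecidableEq ι] (B : Matrix ι κ ℤ) : lamZeroSet B = ∅ ↔ B = 0 := by
  refine ⟨fun h => ?_, fun h => ?_⟩
  · ext i j
    by_contra hij
    have hrow : Pi.single i 1 ᵥ* B ≠ 0 := by
      rw [single_one_vecMul]
      exact fun h0 => hij (congrFun h0 j)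
    exact h.subset ⟨_, hrow, rfl⟩
  · subst h
    ext k
    simp [lamZeroSet]

theorem stmt7_general (M N M' N' : ℕ)
    (B : Matrix (Fin M) (Fin N) ℤ) (B' : Matrix (Fin M') (Fin N') ℤ) :
    sInf (lamZeroSet (Matrix.kroneckerMap (· * ·) B B')) ≤
      sInf (lamZeroSet B) * sInf (lamZeroSet B') := by
  by_cases h : (lamZeroSet B).Nonempty ∧ (lamZeroSet B').Nonempty
  · exact Nat.sInf_le (mul_mem_lamZeroSet_kroneckerMap (Nat.sInf_mem h.1) (Nat.sInf_mem h.2))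
  · have hzero : kroneckerMap (· * ·) B B' = 0 := by
      rcases not_and_or.1 h with hB | hB'
      · rw [(lamZeroSet_eq_empty_iff B).1 (Set.not_nonempty_iff_eq_empty.1 hB)]
        exact kroneckerMap_zero_left _ zero_mul B'
      · rw [(lamZeroSet_eq_empty_iff B').1 (Set.not_nonempty_iff_eq_empty.1 hB')]
        exact kroneckerMap_zero_right _ mul_zero B
    rw [hzero, (lamZeroSet_eq_empty_iff _).2 rfl, Nat.sInf_empty]
    exact Nat.zero_le _

/-- `λ₀` (minimum number of nonzero entries of a nonzero lattice vector) is
sub-multiplicative under the tensor (Kronecker) product of lattice bases with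
linearly independent rows. -/
theorem stmt7 (M N M' N' : ℕ)
    (B : Matrix (Fin M) (Fin N) ℤ) (B' : Matrix (Fin M') (Fin N') ℤ)
    (hB : LinearIndependent ℤ (fun i => B i))
    (hB' : LinearIndependent ℤ (fun i => B' i)) :
    sInf (lamZeroSet (Matrix.kroneckerMap (· * ·) B B')) ≤
      sInf (lamZeroSet B) * sInf (lamZeroSet B') :=
  stmt7_general M N M' N' B B'
end

section
/- Let H = (V, E) be a hypergraph of arity d with N vertices and M hyperedges, let β ∈ [0,1], and let t be a positive integer with 1/t > β. Suppose every vertex subset V' ⊆ V fully contains at most (|V'|/N)^d · M + β·M hyperedges. Then for every δ ∈ [0,1] and every subset E' ⊆ E that is either empty or of size at least M/t: if the vertices touched by E' number at most N·δ, then |E'| ≤ M·δ^d / (1 − βt). -/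
open Finset

/-!
Every hyperedge of `E'` lies inside the set `V'` of vertices touched by `E'`, so the expansion
hypothesis applied to `V'` gives `|E'| ≤ δ^d M + β M`. Legality turns the additive error into a
multiplicative one: `β M ≤ β t |E'|`, which can be absorbed into the left-hand side since `β t < 1`.
-/

lemma card_le_card_filter_subset_biUnion {ι α : Type*} [Fintype ι] [DecidableEq α]
    (E : ι → Finset α) (E' : Finset ι) :
    E'.card ≤ (univ.filter fun e => E e ⊆ E'.biUnion E).card :=
  card_le_card fun e he => mem_filter.mpr ⟨mem_univ e, subset_biUnion_of_mem E he⟩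

lemma card_le_pow_mul_add_of_card_biUnion_le {ι α : Type*} [Fintype ι] [DecidableEq α]
    {N : ℕ} {M β δ : ℝ} {d : ℕ} (E : ι → Finset α)
    (hexp : ∀ V' : Finset α,
      ((univ.filter fun e => E e ⊆ V').card : ℝ) ≤ ((V'.card : ℝ) / N) ^ d * M + β * M)
    (hM : 0 ≤ M) (hδ : 0 ≤ δ) (E' : Finset ι) (htouch : ((E'.biUnion E).card : ℝ) ≤ N * δ) :
    (E'.card : ℝ) ≤ δ ^ d * M + β * M := by
  have hratio : ((E'.biUnion E).card : ℝ) / N ≤ δ :=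
    div_le_of_le_mul₀ N.cast_nonneg hδ (by linarith)
  calc (E'.card : ℝ)
      ≤ (univ.filter fun e => E e ⊆ E'.biUnion E).card := by
        exact_mod_cast card_le_card_filter_subset_biUnion E E'
    _ ≤ (((E'.biUnion E).card : ℝ) / N) ^ d * M + β * M := hexp _
    _ ≤ δ ^ d * M + β * M := by gcongr

lemma one_sub_mul_pos_of_lt_one_div {β t : ℝ} (hβ : 0 ≤ β) (hβt : β < 1 / t) :
    0 < 1 - β * t := by
  have ht : 0 < t := one_div_pos.mp (hβ.trans_lt hβt)
  have : β * t < 1 := (lt_div_iff₀ ht).mp hβt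
  linarith

lemma le_div_one_sub_mul_of_le_add {x a β M t : ℝ} (hβ : 0 ≤ β) (hβt : β < 1 / t)
    (hx : x ≤ a + β * M) (hMx : M / t ≤ x) : x ≤ a / (1 - β * t) := by
  have ht : 0 < t := one_div_pos.mp (hβ.trans_lt hβt)
  have hMx' : β * M ≤ β * t * x := by
    rw [mul_assoc]
    exact mul_le_mul_of_nonneg_left ((div_le_iff₀' ht).mp hMx) hβ
  rw [le_div_iff₀ (one_sub_mul_pos_of_lt_one_div hβ hβt)]
  linarith

theorem stmt10_general (N M d t : ℕ)
    (β : ℝ) (hβ0 : 0 ≤ β) (htβ : β < 1 / t)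
    (E : Fin M → Finset (Fin N))
    (hexp : ∀ V' : Finset (Fin N),
      ((Finset.univ.filter (fun e => E e ⊆ V')).card : ℝ) ≤
        ((V'.card : ℝ) / N) ^ d * M + β * M)
    (δ : ℝ) (hδ0 : 0 ≤ δ)
    (E' : Finset (Fin M)) (hlegal : E' = ∅ ∨ (M : ℝ) / t ≤ E'.card)
    (htouch : ((E'.biUnion E).card : ℝ) ≤ N * δ) :
    (E'.card : ℝ) ≤ M * δ ^ d / (1 - β * t) := by
  rcases hlegal with rfl | hlarge
  · rw [card_empty, Nat.cast_zero]
    exact div_nonneg (by positivity) (one_sub_mul_pos_of_lt_one_div hβ0 htβ).le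
  · rw [mul_comm]
    exact le_div_one_sub_mul_of_le_add hβ0 htβ
      (card_le_pow_mul_add_of_card_biUnion_le E hexp M.cast_nonneg hδ0 E' htouch) hlarge

/-- Base case (`q = 1`) of the legal-expansion theorem.  If every vertex
subset `V'` fully contains at most `(|V'|/N)^d·M + β·M` hyperedges, then for
every `δ ∈ [0,1]` and every hyperedge subset `E'` that is empty or of size at
least `M/t` (with `1/t > β`): if `E'` touches at most `N·δ` vertices, then
`|E'| ≤ M·δ^d/(1 − βt)`. -/
theorem stmt10 (N M d t : ℕ) (hN : 0 < N) (hM : 0 < M) (hd : 0 < d) (ht : 0 < t)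
    (β : ℝ) (hβ0 : 0 ≤ β) (hβ1 : β ≤ 1) (htβ : β < 1 / t)
    (E : Fin M → Finset (Fin N)) (harity : ∀ e, (E e).card = d)
    (hexp : ∀ V' : Finset (Fin N),
      ((Finset.univ.filter (fun e => E e ⊆ V')).card : ℝ) ≤
        ((V'.card : ℝ) / N) ^ d * M + β * M)
    (δ : ℝ) (hδ0 : 0 ≤ δ) (hδ1 : δ ≤ 1)
    (E' : Finset (Fin M)) (hlegal : E' = ∅ ∨ (M : ℝ) / t ≤ E'.card)
    (htouch : ((E'.biUnion E).card : ℝ) ≤ N * δ) :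
    (E'.card : ℝ) ≤ M * δ ^ d / (1 - β * t) :=
  stmt10_general N M d t β hβ0 htβ E hexp δ hδ0 E' hlegal htouch
end

section
/- Let F be a finite field of size more than w, let w ≥ r be positive integers, let δ ∈ (0,1), and let G be as in the expander-walk amplification construction on a d-regular expander where random length-r walks stay in any set S with probability at most (|S|/N + δ)^r. If the code generated by G has relative minimum distance at least D, then the code generated by the amplified matrix G' has relative minimum distance at least 1 − ((1 − D + δ)^r + r/w). -/
/-!
Write `y = xG` for the codeword of `G`. The row of `xG'` belonging to a walk `ω` is
`c ↦ ∑ᵢ y(ωᵢ) c^(i+1)` evaluated at the `w` distinct points `cf j`, i.e. the values of a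
polynomial of degree at most `r`. If the walk meets the support of `y` this polynomial is
nonzero, so the row has at most `r` zeros. Walks avoiding the support stay inside the zero set
of `y`, which has density at most `1 - D`, so by the mixing hypothesis they make up at most a
`(1 - D + δ)^r` fraction of all walks.
-/

open Matrix Finset Polynomial Function

section Hamming

variable {ι β : Type*} [Fintype ι] [Zero β] [DecidableEq β]

theorem hammingNorm_add_card_filter_eq_zero (v : ι → β) :
    hammingNorm v + #{i | v i = 0} = Fintype.card ι := by
  rw [hammingNorm, add_comm, card_filter_add_card_filter_not, card_univ]

theorem hammingNorm_prod {W : Type*} [Fintype W] (v : W × ι → β) :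
    hammingNorm v = ∑ ω, hammingNorm fun j => v (ω, j) := by
  simp only [hammingNorm, card_filter, Fintype.sum_prod_type]

theorem card_compl_mul_le_hammingNorm_prod {W : Type*} [Fintype W] (v : W × ι → β)
    (B : Finset W) {c : ℝ} (hc : ∀ ω ∉ B, c ≤ hammingNorm fun j => v (ω, j)) :
    ((Fintype.card W : ℝ) - #B) * c ≤ hammingNorm v := by
  classical
  rw [← Nat.cast_sub (card_le_univ B), ← card_compl, hammingNorm_prod, Nat.cast_sum,
    ← nsmul_eq_mul, ← sum_const]
  calc ∑ _ ∈ Bᶜ, c ≤ ∑ ω ∈ Bᶜ, (hammingNorm fun j => v (ω, j) : ℝ) :=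
        sum_le_sum fun ω hω => hc ω (mem_compl.mp hω)
    _ ≤ ∑ ω, (hammingNorm fun j => v (ω, j) : ℝ) :=
        sum_le_sum_of_subset_of_nonneg (subset_univ _) fun _ _ _ => Nat.cast_nonneg _

end Hamming

section Vandermonde

theorem coeff_sum_C_mul_X_pow_succ {R : Type*} [Semiring R] {r : ℕ} (c : Fin r → R)
    (k : Fin r) : (∑ i : Fin r, C (c i) * X ^ ((i : ℕ) + 1)).coeff ((k : ℕ) + 1) = c k := by
  simp [Fin.val_inj]

theorem natDegree_sum_C_mul_X_pow_succ_le {R : Type*} [Semiring R] {r : ℕ} (c : Fin r → R) :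
    (∑ i : Fin r, C (c i) * X ^ ((i : ℕ) + 1)).natDegree ≤ r :=
  natDegree_sum_le_of_forall_le _ _ fun i _ => (natDegree_C_mul_X_pow_le _ _).trans i.isLt

variable {R : Type*} [CommRing R] [IsDomain R] [DecidableEq R] {ι : Type*} [Fintype ι]

theorem card_filter_eval_eq_zero_le {a : ι → R} (ha : Injective a) {p : R[X]} (hp : p ≠ 0) :
    #{j | p.eval (a j) = 0} ≤ p.natDegree := by
  rw [← card_image_of_injective _ ha]
  refine card_le_degree_of_subset_roots fun z hz => ?_
  obtain ⟨j, hj, rfl⟩ := mem_image.mp hz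
  exact (mem_roots hp).mpr (mem_filter.mp hj).2

variable {r : ℕ} {a : ι → R} {V : Matrix (Fin r) ι R}

theorem card_filter_vecMul_eq_zero_le (ha : Injective a)
    (hV : ∀ i j, V i j = a j ^ ((i : ℕ) + 1)) {c : Fin r → R} (hc : c ≠ 0) :
    #{j | (c ᵥ* V) j = 0} ≤ r := by
  set p : R[X] := ∑ i : Fin r, C (c i) * X ^ ((i : ℕ) + 1)
  have hp : p ≠ 0 := by
    obtain ⟨k, hk⟩ := Function.ne_iff.mp hc
    intro h
    apply hk
    rw [Pi.zero_apply, ← coeff_sum_C_mul_X_pow_succ c k, ← coeff_zero ((k : ℕ) + 1)]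
    exact congrArg (coeff · _) h
  have heval : ∀ j, p.eval (a j) = (c ᵥ* V) j := fun j => by
    simp [p, eval_finsetSum, vecMul, dotProduct, hV]
  simpa only [heval] using
    (card_filter_eval_eq_zero_le ha hp).trans (natDegree_sum_C_mul_X_pow_succ_le c)

theorem card_sub_le_hammingNorm_vecMul (ha : Injective a)
    (hV : ∀ i j, V i j = a j ^ ((i : ℕ) + 1)) {c : Fin r → R} (hc : c ≠ 0) :
    (Fintype.card ι : ℝ) - r ≤ hammingNorm (c ᵥ* V) := by
  have hsplit : (hammingNorm (c ᵥ* V) + #{j | (c ᵥ* V) j = 0} : ℝ) = Fintype.card ι := by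
    exact_mod_cast hammingNorm_add_card_filter_eq_zero (c ᵥ* V)
  have hzeros : (#{j | (c ᵥ* V) j = 0} : ℝ) ≤ r := by
    exact_mod_cast card_filter_vecMul_eq_zero_le ha hV hc
  linarith

end Vandermonde

section Amplification

variable {R : Type*} [CommSemiring R] {m n W ι κ : Type*} [Fintype m] [Fintype ι]

def walkAmplify (G : Matrix m n R) (vert : W → ι → n) (V : Matrix ι κ R) :
    Matrix m (W × κ) R :=
  of fun a p => ∑ i, G a (vert p.1 i) * V i p.2

theorem vecMul_walkAmplify_apply (x : m → R) (G : Matrix m n R) (vert : W → ι → n)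
    (V : Matrix ι κ R) (ω : W) (j : κ) :
    (x ᵥ* walkAmplify G vert V) (ω, j) = ((x ᵥ* G) ∘ vert ω ᵥ* V) j := by
  simp only [walkAmplify, vecMul, dotProduct, of_apply, Function.comp_apply, mul_sum, sum_mul]
  rw [sum_comm]
  simp only [mul_assoc]

end Amplification

theorem card_sub_mul_le_hammingNorm_walkAmplify {F : Type*} [Field F] [DecidableEq F]
    {m n W : Type*} [Fintype m] [DecidableEq n] [Fintype W] {r w : ℕ} {a : Fin w → F}
    (ha : Injective a) {V : Matrix (Fin r) (Fin w) F} (hV : ∀ i j, V i j = a j ^ ((i : ℕ) + 1))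
    (x : m → F) (G : Matrix m n F) (vert : W → Fin r → n)
    (S : Finset n) (hS : ∀ k ∉ S, (x ᵥ* G) k ≠ 0) :
    ((Fintype.card W : ℝ) - #{ω | ∀ i, vert ω i ∈ S}) * ((w : ℝ) - r) ≤
      hammingNorm (x ᵥ* walkAmplify G vert V) := by
  refine card_compl_mul_le_hammingNorm_prod _ _ fun ω hω => ?_
  have hleave : (x ᵥ* G) ∘ vert ω ≠ 0 := by
    obtain ⟨i, hi⟩ : ∃ i, vert ω i ∉ S := by simpa using hω
    exact Function.ne_iff.mpr ⟨i, hS _ hi⟩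
  simpa only [vecMul_walkAmplify_apply, Fintype.card_fin] using
    card_sub_le_hammingNorm_vecMul ha hV hleave

theorem card_filter_forall_mem_le_of_mixing {W : Type*} [Fintype W] {N r : ℕ}
    (vert : W → Fin r → Fin N) {δ ε : ℝ} (hδ : 0 ≤ δ)
    (hmix : ∀ S : Finset (Fin N),
      ((Finset.univ.filter (fun ω : W => ∀ i, vert ω i ∈ S)).card : ℝ) ≤
        ((S.card : ℝ) / N + δ) ^ r * Fintype.card W)
    (hN : 0 < N) (S : Finset (Fin N)) (hS : (#S : ℝ) ≤ ε * N) :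
    (#{ω | ∀ i, vert ω i ∈ S} : ℝ) ≤ (ε + δ) ^ r * Fintype.card W := by
  refine (hmix S).trans (mul_le_mul_of_nonneg_right (pow_le_pow_left₀ (by positivity) ?_ r)
    (Nat.cast_nonneg _))
  gcongr
  rwa [div_le_iff₀ (by exact_mod_cast hN)]

theorem one_sub_add_div_mul_le {T b e w r Z : ℝ} (hb0 : 0 ≤ b) (hb : b ≤ e * T)
    (hw : 0 ≤ w) (hr : 0 ≤ r) (hZ0 : 0 ≤ Z) (hZ : (T - b) * (w - r) ≤ Z) :
    (1 - (e + r / w)) * (T * w) ≤ Z := by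
  rcases hw.eq_or_lt with rfl | hw
  · simpa using hZ0
  have hbad : b * (w - r) ≤ e * T * w := by
    rcases le_total r w with hrw | hwr
    · nlinarith
    · nlinarith [mul_nonneg (hb0.trans hb) hw.le]
  have hdiv : r / w * (T * w) = r * T := by field_simp
  nlinarith

theorem stmt13_general (F : Type*) [Field F] [DecidableEq F]
    (M N r w : ℕ)
    (δ : ℝ) (hδ0 : 0 < δ)
    (D : ℝ)
    (G : Matrix (Fin M) (Fin N) F)
    (hdist : ∀ x : Fin M → F, x ᵥ* G ≠ 0 →
      D * N ≤ ((Finset.univ.filter (fun j => (x ᵥ* G) j ≠ 0)).card : ℝ))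
    (W : Type*) [Fintype W]
    (vert : W → Fin r → Fin N)
    (hmix : ∀ S : Finset (Fin N),
      ((Finset.univ.filter (fun ω : W => ∀ i, vert ω i ∈ S)).card : ℝ) ≤
        ((S.card : ℝ) / N + δ) ^ r * Fintype.card W)
    (cf : Fin w → F) (hcf_inj : Function.Injective cf)
    (V : Matrix (Fin r) (Fin w) F) (hV : ∀ i j, V i j = cf j ^ ((i : ℕ) + 1))
    (G' : Matrix (Fin M) (W × Fin w) F)
    (hG' : ∀ x ωj, G' x ωj = ∑ i : Fin r, G x (vert ωj.1 i) * V i ωj.2) :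
    ∀ x : Fin M → F, x ᵥ* G' ≠ 0 →
      (1 - ((1 - D + δ) ^ r + (r : ℝ) / w)) * ((Fintype.card W : ℝ) * w) ≤
        ((Finset.univ.filter (fun j => (x ᵥ* G') j ≠ 0)).card : ℝ) := by
  intro x hx
  obtain rfl : G' = walkAmplify G vert V := Matrix.ext hG'
  set y := x ᵥ* G
  have hy : y ≠ 0 := fun hy0 => hx <| funext fun ⟨ω, j⟩ => by
    simp [vecMul_walkAmplify_apply, y, hy0]
  have hN : 0 < N := by
    obtain ⟨k, -⟩ := Function.ne_iff.mp hy
    exact k.pos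
  set S : Finset (Fin N) := {k | y k = 0}
  have hS : (#S : ℝ) ≤ (1 - D) * N := by
    have hsplit : (hammingNorm y + #S : ℝ) = N := by
      exact_mod_cast (hammingNorm_add_card_filter_eq_zero y).trans (Fintype.card_fin N)
    have hD : D * N ≤ (hammingNorm y : ℝ) := hdist x hy
    linarith
  have hbad := card_filter_forall_mem_le_of_mixing vert hδ0.le hmix hN S hS
  have hweight := card_sub_mul_le_hammingNorm_walkAmplify hcf_inj hV x G vert S
    fun k hk => by simpa [S] using hk
  exact one_sub_add_div_mul_le (Nat.cast_nonneg _) hbad (Nat.cast_nonneg _) (Nat.cast_nonneg _)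
    (Nat.cast_nonneg _) hweight

/-- Lower bound of the expander-walk distance amplification.  `W` is the set
of length-`r` walks on an expander whose vertices are the `N` columns of `G`,
such that a uniformly random walk stays inside any set `S` with probability at
most `(|S|/N + δ)^r`.  The amplified matrix `G'` has, for each walk `ω`, the
block `C·V` where `C` collects the walk's columns and `V` is an `r × w`
Vandermonde matrix over `F` (`|F| > w ≥ r`).  If the code generated by `G`
has relative minimum distance at least `D`, then the code generated by `G'`
has relative minimum distance at least `1 − ((1 − D + δ)^r + r/w)`. -/
theorem stmt13 (F : Type*) [Field F] [Fintype F] [DecidableEq F]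
    (M N r w : ℕ) (hM : 0 < M) (hN : 0 < N) (hr : 0 < r) (hw : r ≤ w)
    (hwF : w < Fintype.card F)
    (δ : ℝ) (hδ0 : 0 < δ) (hδ1 : δ < 1)
    (D : ℝ) (hD0 : 0 ≤ D) (hD1 : D ≤ 1)
    (G : Matrix (Fin M) (Fin N) F)
    (hdist : ∀ x : Fin M → F, x ᵥ* G ≠ 0 →
      D * N ≤ ((Finset.univ.filter (fun j => (x ᵥ* G) j ≠ 0)).card : ℝ))
    (W : Type*) [Fintype W] [DecidableEq W] [Nonempty W]
    (vert : W → Fin r → Fin N)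
    (hmix : ∀ S : Finset (Fin N),
      ((Finset.univ.filter (fun ω : W => ∀ i, vert ω i ∈ S)).card : ℝ) ≤
        ((S.card : ℝ) / N + δ) ^ r * Fintype.card W)
    (cf : Fin w → F) (hcf_inj : Function.Injective cf) (hcf_ne : ∀ j, cf j ≠ 0)
    (V : Matrix (Fin r) (Fin w) F) (hV : ∀ i j, V i j = cf j ^ ((i : ℕ) + 1))
    (G' : Matrix (Fin M) (W × Fin w) F)
    (hG' : ∀ x ωj, G' x ωj = ∑ i : Fin r, G x (vert ωj.1 i) * V i ωj.2) :
    ∀ x : Fin M → F, x ᵥ* G' ≠ 0 →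
      (1 - ((1 - D + δ) ^ r + (r : ℝ) / w)) * ((Fintype.card W : ℝ) * w) ≤
        ((Finset.univ.filter (fun j => (x ᵥ* G') j ≠ 0)).card : ℝ) :=
  stmt13_general F M N r w δ hδ0 D G hdist W vert hmix cf hcf_inj V hV G' hG'
end
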